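/- Let Ω ⊆ ℂ be a domain, h : Ω → ℂ holomorphic, and u₁, u₂ : Ω → ℝ C² solutions of Δu = 4|h(z)|²e^{2u}. Then v(z) = max{u₁(z), u₂(z)} - u₂(z) is subharmonic on Ω. -/

import Mathlib

/-!
Write `w = u₁ - u₂`, so that `v = max w 0`. Where `w > 0`,
`Δw = 4|h|²(e^{2u₁} - e^{2u₂}) ≥ 0`, and a C² function with nonnegative Laplacian satisfies the
sub-mean value inequality: for `g(s) = ∫ w(c + s e^{it}) dt` and `A = g'`, differentiating in `s`
and integrating by parts in `t` gives `(s A(s))' = s ∫ Δw(c + s e^{it}) dt ≥ 0`, so `A ≥ 0`,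
`g` increases and `2π w(c) = g(0) ≤ g(r)`. Since `v ≥ w`, the inequality passes to `v` near points
where `w > 0`; near the other points it is trivial because `v ≥ 0 = v(c)`.
-/

open Complex Real

/-- Euclidean Laplacian of a real-valued function on `ℂ`. -/
noncomputable def lap (u : ℂ → ℝ) (z : ℂ) : ℝ :=
  fderiv ℝ (fun w => fderiv ℝ u w 1) z 1 + fderiv ℝ (fun w => fderiv ℝ u w Complex.I) z Complex.I

/-- `v` is subharmonic on the open set `Ω`: it is continuous and satisfies the
sub-mean value inequality on all sufficiently small circles. -/
def SubharmonicOn (v : ℂ → ℝ) (Ω : Set ℂ) : Prop :=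
  ContinuousOn v Ω ∧
  ∀ z₀ ∈ Ω, ∃ ε > 0, ∀ r : ℝ, 0 < r → r < ε →
    v z₀ ≤ (1 / (2 * π)) * ∫ t in (0:ℝ)..(2 * π), v (z₀ + r * Complex.exp (t * Complex.I))

open InnerProductSpace Laplacian Metric Set MeasureTheory

theorem lap_eq_laplacian {u : ℂ → ℝ} {z : ℂ} (hu : ContDiffAt ℝ 2 u z) :
    lap u z = Δ u z := by
  have hd : DifferentiableAt ℝ (fderiv ℝ u) z :=
    (hu.fderiv_right (m := 1) (by norm_num)).differentiableAt one_ne_zero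
  rw [laplacian_eq_iteratedFDeriv_complexPlane, lap,
    fderiv_clm_apply hd (differentiableAt_const 1),
    fderiv_clm_apply hd (differentiableAt_const I)]
  simp [iteratedFDeriv_two_apply]

theorem laplacian_eq_fderiv_fderiv_circle {F : Type*} [NormedAddCommGroup F] [NormedSpace ℝ F]
    (f : ℂ → F) (z : ℂ) (a : Circle) :
    Δ f z = fderiv ℝ (fderiv ℝ f) z a a + fderiv ℝ (fderiv ℝ f) z (a * I) (a * I) := by
  simp [laplacian_eq_iteratedFDeriv_orthonormalBasis f (orthonormalBasisOneI.map (rotation a)),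
    Fin.sum_univ_two, iteratedFDeriv_two_apply, rotation_apply]

theorem hasDerivAt_intervalIntegral_of_continuousOn {E : Type*} [NormedAddCommGroup E]
    [NormedSpace ℝ E] {F F' : ℝ → ℝ → E} {S : Set ℝ} (hS : IsOpen S) {a b x₀ : ℝ}
    (hx₀ : x₀ ∈ S) (hF : ∀ x ∈ S, Continuous (F x))
    (hF' : ContinuousOn (Function.uncurry F') (S ×ˢ univ))
    (hd : ∀ x ∈ S, ∀ t, HasDerivAt (F · t) (F' x t) x) :
    HasDerivAt (fun x => ∫ t in a..b, F x t) (∫ t in a..b, F' x₀ t) x₀ := by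
  obtain ⟨δ, hδ, hδS⟩ := nhds_basis_closedBall.mem_iff.1 (hS.mem_nhds hx₀)
  obtain ⟨C, hC⟩ := ((isCompact_closedBall x₀ δ).prod isCompact_uIcc).exists_bound_of_continuousOn
    (hF'.mono (prod_mono hδS (subset_univ (uIcc a b))))
  have hball : ball x₀ δ ⊆ S := ball_subset_closedBall.trans hδS
  refine (intervalIntegral.hasDerivAt_integral_of_dominated_loc_of_deriv_le (bound := fun _ => C)
    (ball_mem_nhds x₀ hδ)
    (Filter.eventually_of_mem (ball_mem_nhds x₀ hδ) fun x hx =>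
      (hF x (hball hx)).aestronglyMeasurable)
    ((hF x₀ hx₀).intervalIntegrable a b)
    ((hF'.comp_continuous (Continuous.prodMk_right x₀) fun t =>
      ⟨hx₀, mem_univ t⟩).aestronglyMeasurable)
    (Filter.Eventually.of_forall fun t ht x hx =>
      hC (x, t) ⟨ball_subset_closedBall hx, uIoc_subset_uIcc ht⟩)
    intervalIntegrable_const
    (Filter.Eventually.of_forall fun t _ x hx => hd x (hball hx) t)).2

theorem circleMap_mem_ball_of_abs_lt (c : ℂ) {s ε : ℝ} (hs : |s| < ε) (t : ℝ) :
    circleMap c s t ∈ ball c ε := by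
  rwa [mem_ball, dist_eq_norm, circleMap_sub_center, norm_circleMap_zero]

theorem hasDerivAt_circleMap_radius (c : ℂ) (s t : ℝ) :
    HasDerivAt (circleMap c · t) (Complex.exp (t * I)) s := by
  simpa [circleMap] using ((hasDerivAt_id (s : ℂ)).comp_ofReal.mul_const _).const_add c

theorem hasDerivAt_exp_mul_I (t : ℝ) :
    HasDerivAt (fun t : ℝ => Complex.exp (t * I)) (Complex.exp (t * I) * I) t := by
  simpa using ((hasDerivAt_id (t : ℂ)).comp_ofReal.mul_const I).cexp

theorem ContinuousOn.comp_circleMap {X : Type*} [TopologicalSpace X] {f : ℂ → X} {c : ℂ}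
    {ε : ℝ} (hf : ContinuousOn f (ball c ε)) :
    ContinuousOn (fun p : ℝ × ℝ => f (circleMap c p.1 p.2)) ({s | |s| < ε} ×ˢ univ) :=
  hf.comp circleMap.continuous.continuousOn fun p hp => circleMap_mem_ball_of_abs_lt c hp.1 p.2

theorem ContDiffOn.hasDerivAt_comp_circleMap_radius {G : Type*} [NormedAddCommGroup G]
    [NormedSpace ℝ G] {f : ℂ → G} {c : ℂ} {ε s : ℝ} (hf : ContDiffOn ℝ 1 f (ball c ε))
    (hs : |s| < ε) (t : ℝ) :
    HasDerivAt (fun s => f (circleMap c s t))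
      (fderiv ℝ f (circleMap c s t) (Complex.exp (t * I))) s :=
  ((hf.differentiableOn one_ne_zero).differentiableAt (isOpen_ball.mem_nhds
    (circleMap_mem_ball_of_abs_lt c hs t))).hasFDerivAt.comp_hasDerivAt s
    (hasDerivAt_circleMap_radius c s t)

theorem monotoneOn_Ico_of_hasDerivAt_nonneg {f f' : ℝ → ℝ} {a b : ℝ}
    (hf : ∀ x ∈ Ico a b, HasDerivAt f (f' x) x) (hf' : ∀ x ∈ Ioo a b, 0 ≤ f' x) :
    MonotoneOn f (Ico a b) :=
  monotoneOn_of_hasDerivWithinAt_nonneg (convex_Ico a b)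
    (fun x hx => (hf x hx).continuousAt.continuousWithinAt)
    (fun x hx => (hf x (interior_subset hx)).hasDerivWithinAt)
    fun x hx => hf' x (by rwa [interior_Ico] at hx)

section CircleIntegral

variable {w : ℂ → ℝ} {c : ℂ} {ε s : ℝ}

theorem hasDerivAt_integral_circleMap_radius (hw : ContDiffOn ℝ 1 w (ball c ε))
    (hs : |s| < ε) :
    HasDerivAt (fun s => ∫ t in 0..2 * π, w (circleMap c s t))
      (∫ t in 0..2 * π, fderiv ℝ w (circleMap c s t) (Complex.exp (t * I))) s :=
  hasDerivAt_intervalIntegral_of_continuousOn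
    (F' := fun s t => fderiv ℝ w (circleMap c s t) (Complex.exp (t * I)))
    (isOpen_lt continuous_abs continuous_const) hs
    (fun x hx => hw.continuousOn.comp_continuous (continuous_circleMap c x)
      (circleMap_mem_ball_of_abs_lt c hx))
    ((hw.continuousOn_fderiv_of_isOpen isOpen_ball le_rfl).comp_circleMap.clm_apply
      (by fun_prop : Continuous fun p : ℝ × ℝ => Complex.exp (p.2 * I)).continuousOn)
    fun x hx => hw.hasDerivAt_comp_circleMap_radius hx

theorem hasDerivAt_integral_fderiv_circleMap_radius (hw : ContDiffOn ℝ 2 w (ball c ε))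
    (hs : |s| < ε) :
    HasDerivAt (fun s => ∫ t in 0..2 * π, fderiv ℝ w (circleMap c s t) (Complex.exp (t * I)))
      (∫ t in 0..2 * π, fderiv ℝ (fderiv ℝ w) (circleMap c s t) (Complex.exp (t * I))
        (Complex.exp (t * I))) s := by
  have hw' : ContDiffOn ℝ 1 (fderiv ℝ w) (ball c ε) := hw.fderiv_of_isOpen isOpen_ball le_rfl
  have he : Continuous fun p : ℝ × ℝ => Complex.exp (p.2 * I) := by fun_prop
  refine hasDerivAt_intervalIntegral_of_continuousOn (F' := fun s t =>
      fderiv ℝ (fderiv ℝ w) (circleMap c s t) (Complex.exp (t * I)) (Complex.exp (t * I)))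
    (isOpen_lt continuous_abs continuous_const) hs
    (fun x hx => (hw'.continuousOn.comp_continuous (continuous_circleMap c x)
      (circleMap_mem_ball_of_abs_lt c hx)).clm_apply (by fun_prop))
    (((hw'.continuousOn_fderiv_of_isOpen isOpen_ball le_rfl).comp_circleMap.clm_apply
      he.continuousOn).clm_apply he.continuousOn) fun x hx t => ?_
  simpa using (hw'.hasDerivAt_comp_circleMap_radius hx t).clm_apply
    (hasDerivAt_const x (Complex.exp (t * I)))

theorem continuous_fderiv_fderiv_circleMap (hw : ContDiffOn ℝ 2 w (ball c ε)) (hs : |s| < ε)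
    {u v : ℝ → ℂ} (hu : Continuous u) (hv : Continuous v) :
    Continuous fun t => fderiv ℝ (fderiv ℝ w) (circleMap c s t) (u t) (v t) :=
  ((((hw.fderiv_of_isOpen isOpen_ball le_rfl).continuousOn_fderiv_of_isOpen isOpen_ball
    le_rfl).comp_continuous (continuous_circleMap c s)
    (circleMap_mem_ball_of_abs_lt c hs)).clm_apply hu).clm_apply hv

/-- The derivative of `t ↦ Dw(c + s e^{it})(i e^{it})` is
`s D²w(i e^{it}, i e^{it}) - Dw(e^{it})`, and it integrates to zero over a period. -/
theorem integral_fderiv_circleMap_eq (hw : ContDiffOn ℝ 2 w (ball c ε)) (hs : |s| < ε) :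
    ∫ t in 0..2 * π, fderiv ℝ w (circleMap c s t) (Complex.exp (t * I)) =
      s * ∫ t in 0..2 * π, fderiv ℝ (fderiv ℝ w) (circleMap c s t) (Complex.exp (t * I) * I)
        (Complex.exp (t * I) * I) := by
  have hw' : ContDiffOn ℝ 1 (fderiv ℝ w) (ball c ε) := hw.fderiv_of_isOpen isOpen_ball le_rfl
  have hmem := circleMap_mem_ball_of_abs_lt c hs
  have hangular : ∀ t, HasDerivAt (fun t : ℝ => fderiv ℝ w (circleMap c s t) (Complex.exp (t * I) * I))
      (s * fderiv ℝ (fderiv ℝ w) (circleMap c s t) (Complex.exp (t * I) * I)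
        (Complex.exp (t * I) * I) - fderiv ℝ w (circleMap c s t) (Complex.exp (t * I))) t := by
    intro t
    have := (((hw'.differentiableOn one_ne_zero).differentiableAt
      (isOpen_ball.mem_nhds (hmem t))).hasFDerivAt.comp_hasDerivAt t
      (hasDerivAt_circleMap c s t)).clm_apply ((hasDerivAt_exp_mul_I t).mul_const I)
    refine this.congr_deriv ?_
    have hγ' : circleMap 0 s t * I = s • (Complex.exp (t * I) * I) := by
      rw [circleMap_zero, Complex.real_smul]; ring
    rw [hγ', mul_assoc, I_mul_I, mul_neg_one]
    simp only [map_smul, map_neg, smul_apply, smul_eq_mul, Function.comp_apply,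
      sub_eq_add_neg]
  have hcont₁ : Continuous fun t => fderiv ℝ w (circleMap c s t) (Complex.exp (t * I)) :=
    ((hw.continuousOn_fderiv_of_isOpen isOpen_ball one_le_two).comp_continuous
      (continuous_circleMap c s) hmem).clm_apply (by fun_prop)
  have hcont₂ : Continuous fun t => fderiv ℝ (fderiv ℝ w) (circleMap c s t)
      (Complex.exp (t * I) * I) (Complex.exp (t * I) * I) :=
    continuous_fderiv_fderiv_circleMap hw hs (by fun_prop) (by fun_prop)
  have hperiod := intervalIntegral.integral_eq_sub_of_hasDerivAt (fun t _ => hangular t)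
    (((hcont₂.const_mul s).sub hcont₁).intervalIntegrable 0 (2 * π))
  have he : Complex.exp (↑(2 * π) * I) = Complex.exp (↑(0:ℝ) * I) := by
    push_cast; rw [exp_two_pi_mul_I, zero_mul, Complex.exp_zero]
  rw [(periodic_circleMap c s).eq, he, sub_self, intervalIntegral.integral_sub
    ((hcont₂.const_mul s).intervalIntegrable 0 (2 * π)) (hcont₁.intervalIntegrable 0 (2 * π)),
    intervalIntegral.integral_const_mul, sub_eq_zero] at hperiod
  exact hperiod.symm

theorem hasDerivAt_mul_integral_fderiv_circleMap (hw : ContDiffOn ℝ 2 w (ball c ε))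
    (hs : |s| < ε) :
    HasDerivAt (fun s => s * ∫ t in 0..2 * π, fderiv ℝ w (circleMap c s t) (Complex.exp (t * I)))
      (s * ∫ t in 0..2 * π, Δ w (circleMap c s t)) s := by
  have he : Continuous fun t : ℝ => Complex.exp (t * I) := by fun_prop
  have heI : Continuous fun t : ℝ => Complex.exp (t * I) * I := by fun_prop
  refine ((hasDerivAt_id s).mul
    (hasDerivAt_integral_fderiv_circleMap_radius hw hs)).congr_deriv ?_
  simp only [id, one_mul, integral_fderiv_circleMap_eq hw hs, ← mul_add,
    ← intervalIntegral.integral_add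
      ((continuous_fderiv_fderiv_circleMap hw hs heI heI).intervalIntegrable 0 (2 * π))
      ((continuous_fderiv_fderiv_circleMap hw hs he he).intervalIntegrable 0 (2 * π))]
  congr 1
  refine intervalIntegral.integral_congr fun t _ => ?_
  rw [laplacian_eq_fderiv_fderiv_circle w _ (Circle.exp t), Circle.coe_exp, add_comm]

theorem integral_fderiv_circleMap_nonneg (hw : ContDiffOn ℝ 2 w (ball c ε))
    (hΔ : ∀ z ∈ ball c ε, 0 ≤ Δ w z) (hs₀ : 0 < s) (hs : s < ε) :
    0 ≤ ∫ t in 0..2 * π, fderiv ℝ w (circleMap c s t) (Complex.exp (t * I)) := by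
  have hmono := monotoneOn_Ico_of_hasDerivAt_nonneg
    (fun x hx => hasDerivAt_mul_integral_fderiv_circleMap hw ((abs_of_nonneg hx.1).trans_lt hx.2))
    fun x hx => mul_nonneg hx.1.le (intervalIntegral.integral_nonneg two_pi_pos.le fun t _ =>
      hΔ _ (circleMap_mem_ball_of_abs_lt c ((abs_of_pos hx.1).trans_lt hx.2) t))
  have h0s := hmono (left_mem_Ico.2 (hs₀.trans hs)) ⟨hs₀.le, hs⟩ hs₀.le
  simp only [zero_mul] at h0s
  exact nonneg_of_mul_nonneg_right h0s hs₀

theorem monotoneOn_integral_circleMap (hw : ContDiffOn ℝ 2 w (ball c ε))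
    (hΔ : ∀ z ∈ ball c ε, 0 ≤ Δ w z) :
    MonotoneOn (fun s => ∫ t in 0..2 * π, w (circleMap c s t)) (Ico 0 ε) :=
  monotoneOn_Ico_of_hasDerivAt_nonneg (fun _ hx => hasDerivAt_integral_circleMap_radius
    (hw.of_le one_le_two) ((abs_of_nonneg hx.1).trans_lt hx.2))
    fun _ hx => integral_fderiv_circleMap_nonneg hw hΔ hx.1 hx.2

theorem ContDiffOn.le_circleAverage_of_laplacian_nonneg {r : ℝ}
    (hw : ContDiffOn ℝ 2 w (ball c ε)) (hΔ : ∀ z ∈ ball c ε, 0 ≤ Δ w z) (hr₀ : 0 ≤ r) (hr : r < ε) :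
    w c ≤ circleAverage w c r := by
  have hmono := monotoneOn_integral_circleMap hw hΔ (left_mem_Ico.2 (hr₀.trans_lt hr))
    ⟨hr₀, hr⟩ hr₀
  simp only [circleMap_zero_radius, Function.const_apply, intervalIntegral.integral_const,
    sub_zero, smul_eq_mul] at hmono
  rw [circleAverage_def, smul_eq_mul, le_inv_mul_iff₀ two_pi_pos]
  exact hmono

end CircleIntegral

theorem subharmonicOn_of_le_circleAverage {v : ℂ → ℝ} {Ω : Set ℂ} (hv : ContinuousOn v Ω)
    (hmean : ∀ z ∈ Ω, ∃ ε > 0, ∀ r, 0 < r → r < ε → v z ≤ circleAverage v z r) :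
    SubharmonicOn v Ω :=
  ⟨hv, by simpa only [circleAverage_def, circleMap, smul_eq_mul, one_div] using hmean⟩

theorem subharmonicOn_max_zero {w : ℂ → ℝ} {Ω : Set ℂ} (hΩ : IsOpen Ω)
    (hw : ContDiffOn ℝ 2 w Ω) (hΔ : ∀ z ∈ Ω, 0 < w z → 0 ≤ Δ w z) :
    SubharmonicOn (fun z => max (w z) 0) Ω := by
  have hv : ContinuousOn (fun z => max (w z) 0) Ω := hw.continuousOn.sup continuousOn_const
  refine subharmonicOn_of_le_circleAverage hv fun z₀ hz₀ => ?_
  rcases le_or_gt (w z₀) 0 with hle | hlt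
  · refine ⟨1, one_pos, fun r _ _ => ?_⟩
    rw [max_eq_right hle]
    exact circleAverage_nonneg_of_nonneg fun z _ => le_max_right (w z) 0
  obtain ⟨ε, hε, hball⟩ :=
    isOpen_iff.1 (hw.continuousOn.isOpen_inter_preimage hΩ isOpen_Ioi) z₀ ⟨hz₀, hlt⟩
  have hballΩ : ball z₀ ε ⊆ Ω := hball.trans inter_subset_left
  refine ⟨ε, hε, fun r hr hrε => ?_⟩
  have hsphere : sphere z₀ r ⊆ Ω := (sphere_subset_ball hrε).trans hballΩ
  calc max (w z₀) 0 = w z₀ := max_eq_left hlt.le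
    _ ≤ circleAverage w z₀ r := (hw.mono hballΩ).le_circleAverage_of_laplacian_nonneg
      (fun z hz => hΔ z (hballΩ hz) (hball hz).2) hr.le hrε
    _ ≤ circleAverage (fun z => max (w z) 0) z₀ r :=
      circleAverage_mono ((hw.continuousOn.mono hsphere).circleIntegrable hr.le)
        ((hv.mono hsphere).circleIntegrable hr.le) fun z _ => le_max_left (w z) 0

theorem laplacian_sub_nonneg_of_le {u₁ u₂ : ℂ → ℝ} {z : ℂ} {F : ℝ → ℝ} (hF : Monotone F)
    (h₁ : ContDiffAt ℝ 2 u₁ z) (h₂ : ContDiffAt ℝ 2 u₂ z)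
    (hpde₁ : lap u₁ z = F (u₁ z)) (hpde₂ : lap u₂ z = F (u₂ z)) (hle : u₂ z ≤ u₁ z) :
    0 ≤ Δ (u₁ - u₂) z := by
  rw [h₁.laplacian_sub h₂, ← lap_eq_laplacian h₁, ← lap_eq_laplacian h₂, hpde₁, hpde₂]
  exact sub_nonneg.2 (hF hle)

theorem max_difference_subharmonic_general
    (Ω : Set ℂ) (hΩ : IsOpen Ω)
    (h : ℂ → ℂ)
    (u₁ u₂ : ℂ → ℝ) (hu₁ : ContDiffOn ℝ 2 u₁ Ω) (hu₂ : ContDiffOn ℝ 2 u₂ Ω)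
    (hpde₁ : ∀ z ∈ Ω, lap u₁ z = 4 * ‖h z‖^2 * Real.exp (2 * u₁ z))
    (hpde₂ : ∀ z ∈ Ω, lap u₂ z = 4 * ‖h z‖^2 * Real.exp (2 * u₂ z)) :
    SubharmonicOn (fun z => max (u₁ z) (u₂ z) - u₂ z) Ω := by
  have hΔ : ∀ z ∈ Ω, 0 < (u₁ - u₂) z → 0 ≤ Δ (u₁ - u₂) z := fun z hz hpos =>
    laplacian_sub_nonneg_of_le (F := fun x => 4 * ‖h z‖ ^ 2 * Real.exp (2 * x))
      (fun a b hab => by dsimp only; gcongr) (hu₁.contDiffAt (hΩ.mem_nhds hz))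
      (hu₂.contDiffAt (hΩ.mem_nhds hz)) (hpde₁ z hz) (hpde₂ z hz) (sub_pos.1 hpos).le
  convert subharmonicOn_max_zero hΩ (hu₁.sub hu₂) hΔ using 2 with z
  rw [← max_sub_sub_right, sub_self]

/-- If `u₁, u₂` are C² solutions of `Δu = 4|h|²e^{2u}` on a domain `Ω` with `h`
holomorphic, then `v = max{u₁,u₂} - u₂` is subharmonic on `Ω`. -/
theorem max_difference_subharmonic
    (Ω : Set ℂ) (hΩ : IsOpen Ω) (hconn : IsConnected Ω)
    (h : ℂ → ℂ) (hh : DifferentiableOn ℂ h Ω)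
    (u₁ u₂ : ℂ → ℝ) (hu₁ : ContDiffOn ℝ 2 u₁ Ω) (hu₂ : ContDiffOn ℝ 2 u₂ Ω)
    (hpde₁ : ∀ z ∈ Ω, lap u₁ z = 4 * ‖h z‖^2 * Real.exp (2 * u₁ z))
    (hpde₂ : ∀ z ∈ Ω, lap u₂ z = 4 * ‖h z‖^2 * Real.exp (2 * u₂ z)) :
    SubharmonicOn (fun z => max (u₁ z) (u₂ z) - u₂ z) Ω :=
  max_difference_subharmonic_general Ω hΩ h u₁ u₂ hu₁ hu₂ hpde₁ hpde₂
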